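/- arXiv:2407.15809 — 6 statements merged into one kernel-verified Lean document; each statement's English description precedes it below -/
import Mathlib

section
/- Let U be a finite set of size n. Let f be a monotone non-decreasing subadditive set function on U with f(∅)=0, and suppose X₁,…,X_k is a partition of U into k = ⌈√n⌉ parts each of size at most ⌈√n⌉, where f is symmetric (f(S) depends only on |S|). Then for every nonempty S ⊆ U, the sum over parts X_i intersecting S of f(X_i) is at most 2⌈√n⌉ · f(S). -/
open Finset

lemma stmt_1_aux {α : Type*} [DecidableEq α]
    (f : Finset α → ℝ)
    (hmono : ∀ A B : Finset α, A ⊆ B → f A ≤ f B)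
    (hsub : ∀ A B : Finset α, f (A ∪ B) ≤ f A + f B)
    (hnonneg : ∀ A : Finset α, 0 ≤ f A)
    (hsym : ∀ A B : Finset α, A.card = B.card → f A = f B)
    (S : Finset α) (hS : 0 < S.card) :
    ∀ m : ℕ, ∀ A : Finset α, A.card ≤ m →
      f A ≤ ((A.card / S.card + 1 : ℕ) : ℝ) * f S := by
  intro m
  induction m with
  | zero =>
    intro A hA
    have hA0 : A = ∅ := Finset.card_eq_zero.mp (Nat.le_zero.mp hA)
    subst hA0
    have h1 : (1 : ℝ) ≤ ((0 / S.card + 1 : ℕ) : ℝ) := by push_cast; linarith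
    have := hnonneg S
    have hfe : f (∅ : Finset α) ≤ f S := hmono _ _ (Finset.empty_subset S)
    simp only [Finset.card_empty]
    nlinarith
  | succ m ih =>
    intro A hA
    by_cases hle : A.card ≤ S.card
    · obtain ⟨B, hBS, hBcard⟩ := Finset.exists_subset_card_eq hle
      have h1 : f A = f B := hsym A B hBcard.symm
      have h2 : f B ≤ f S := hmono B S hBS
      have h3 : (1 : ℝ) ≤ ((A.card / S.card + 1 : ℕ) : ℝ) := by push_cast; linarith
      have := hnonneg S
      nlinarith
    · push_neg at hle
      have hsle : S.card ≤ A.card := le_of_lt hle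
      obtain ⟨B, hBA, hBcard⟩ := Finset.exists_subset_card_eq hsle
      have hunion : B ∪ (A \ B) = A := Finset.union_sdiff_of_subset hBA
      have h1 : f A ≤ f B + f (A \ B) := by
        calc f A = f (B ∪ (A \ B)) := by rw [hunion]
          _ ≤ f B + f (A \ B) := hsub _ _
      have hfB : f B = f S := hsym _ _ hBcard
      have hcard : (A \ B).card = A.card - S.card := by
        rw [Finset.card_sdiff_of_subset hBA, hBcard]
      have hsmall : (A \ B).card ≤ m := by omega
      have h2 := ih (A \ B) hsmall
      have hcoef : (A \ B).card / S.card + 1 + 1 = A.card / S.card + 1 := by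
        have hadd : (A.card - S.card + S.card) / S.card = (A.card - S.card) / S.card + 1 :=
          Nat.add_div_right _ hS
        have hcanc : A.card - S.card + S.card = A.card := Nat.sub_add_cancel hsle
        rw [hcanc] at hadd
        rw [hcard]
        omega
      have : f A ≤ (((A \ B).card / S.card + 1 : ℕ) : ℝ) * f S + f S := by linarith
      have hco : (((A \ B).card / S.card + 1 : ℕ) : ℝ) + 1 = ((A.card / S.card + 1 : ℕ) : ℝ) := by
        rw [← hcoef]; push_cast; ring
      nlinarith [hnonneg S]

/-- Symmetric subadditive JRP upper bound: with a partition of `U` into `⌈√n⌉` parts of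
size at most `⌈√n⌉`, the sum of `f` over parts intersecting a nonempty `S` is at most
`2⌈√n⌉ ⬝ f S`. -/
theorem stmt_1 {α : Type*} [Fintype α] [DecidableEq α]
    (n : ℕ) (hn : n = Fintype.card α)
    (f : Finset α → ℝ)
    (hmono : ∀ A B : Finset α, A ⊆ B → f A ≤ f B)
    (hsub : ∀ A B : Finset α, f (A ∪ B) ≤ f A + f B)
    (h0 : f ∅ = 0)
    (hnonneg : ∀ A : Finset α, 0 ≤ f A)
    (hsym : ∀ A B : Finset α, A.card = B.card → f A = f B)
    (k : ℕ) (hk : k = ⌈Real.sqrt n⌉₊)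
    (X : Fin k → Finset α)
    (hdisj : ∀ i j : Fin k, i ≠ j → Disjoint (X i) (X j))
    (hcover : ∀ a : α, ∃ i : Fin k, a ∈ X i)
    (hsize : ∀ i : Fin k, (X i).card ≤ ⌈Real.sqrt n⌉₊) :
    ∀ S : Finset α, S.Nonempty →
      ∑ i ∈ Finset.univ.filter (fun i : Fin k => (X i ∩ S).Nonempty), f (X i)
        ≤ 2 * (⌈Real.sqrt n⌉₊ : ℝ) * f S := by
  classical
  intro S hSne
  set k' := ⌈Real.sqrt n⌉₊ with hk'
  have hS : 0 < S.card := Finset.card_pos.mpr hSne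
  set F := Finset.univ.filter (fun i : Fin k => (X i ∩ S).Nonempty) with hF
  -- each term bounded
  have hterm : ∀ i ∈ F, f (X i) ≤ ((k' / S.card + 1 : ℕ) : ℝ) * f S := by
    intro i _
    have h1 := stmt_1_aux f hmono hsub hnonneg hsym S hS (X i).card (X i) le_rfl
    have h2 : (X i).card / S.card + 1 ≤ k' / S.card + 1 := by
      have := Nat.div_le_div_right (c := S.card) (hsize i)
      omega
    have h3 : (((X i).card / S.card + 1 : ℕ) : ℝ) ≤ ((k' / S.card + 1 : ℕ) : ℝ) := by
      exact_mod_cast h2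
    nlinarith [hnonneg S]
  have hsum : ∑ i ∈ F, f (X i) ≤ (F.card : ℝ) * (((k' / S.card + 1 : ℕ) : ℝ) * f S) := by
    have := Finset.sum_le_card_nsmul F (fun i => f (X i))
      (((k' / S.card + 1 : ℕ) : ℝ) * f S) hterm
    simpa [nsmul_eq_mul] using this
  -- F.card ≤ S.card
  obtain ⟨a0, ha0⟩ := hSne
  have hFS : F.card ≤ S.card := by
    have hg : ∀ i : Fin k, ∃ a : α, i ∈ F → a ∈ X i ∩ S := by
      intro i
      by_cases hi : i ∈ F
      · obtain ⟨a, ha⟩ := (Finset.mem_filter.mp hi).2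
        exact ⟨a, fun _ => ha⟩
      · exact ⟨a0, fun h => absurd h hi⟩
    choose g hgmem using hg
    apply Finset.card_le_card_of_injOn g
    · intro i hi
      exact (Finset.mem_inter.mp (hgmem i hi)).2
    · intro i hi j hj hij
      by_contra hne
      have h1 : g i ∈ X i := (Finset.mem_inter.mp (hgmem i hi)).1
      have h2 : g i ∈ X j := hij ▸ (Finset.mem_inter.mp (hgmem j hj)).1
      exact Finset.disjoint_left.mp (hdisj i j hne) h1 h2
  have hFk : F.card ≤ k' := by
    have h1 : F.card ≤ (Finset.univ : Finset (Fin k)).card := Finset.card_filter_le _ _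
    simpa [hk] using h1
  -- nat arithmetic
  have hnat : F.card * (k' / S.card + 1) ≤ 2 * k' := by
    have h1 : F.card * (k' / S.card) ≤ S.card * (k' / S.card) :=
      Nat.mul_le_mul_right _ hFS
    have h2 : S.card * (k' / S.card) ≤ k' := Nat.mul_div_le k' S.card
    calc F.card * (k' / S.card + 1) = F.card * (k' / S.card) + F.card := by ring
      _ ≤ k' + k' := by omega
      _ = 2 * k' := by ring
  have hcast : (F.card : ℝ) * ((k' / S.card + 1 : ℕ) : ℝ) ≤ 2 * (k' : ℝ) := by
    exact_mod_cast hnat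
  calc ∑ i ∈ F, f (X i) ≤ (F.card : ℝ) * (((k' / S.card + 1 : ℕ) : ℝ) * f S) := hsum
    _ ≤ 2 * (k' : ℝ) * f S := by nlinarith [hnonneg S]
end

section
/- Let n be a perfect square and U a set of n elements. Define f(S) = ⌈|S|/√n⌉. Then for every partition X₁,…,X_k of U, there exists a nonempty set X ⊆ U such that (∑_{i=1}^k f(X_i)) / f(X) ≥ √n / 2, where X intersects each X_i exactly once. -/
open Finset

/-- Lower bound for disjoint approximations of the symmetric subadditive function
`f S = ⌈|S|/√n⌉` on a universe of `n = m²` elements: every partition admits a transversal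
`X` with `(∑ᵢ f(Xᵢ)) / f(X) ≥ √n / 2`. -/
theorem stmt_2 {α : Type*} [Fintype α] [DecidableEq α]
    (n m : ℕ) (hm : 0 < m) (hnm : n = m ^ 2) (hn : n = Fintype.card α)
    (f : Finset α → ℕ)
    (hf : ∀ S : Finset α, f S = ⌈(S.card : ℝ) / m⌉₊)
    (k : ℕ) (hk : 0 < k) (X : Fin k → Finset α)
    (hne : ∀ i : Fin k, (X i).Nonempty)
    (hdisj : ∀ i j : Fin k, i ≠ j → Disjoint (X i) (X j))
    (hcover : ∀ a : α, ∃ i : Fin k, a ∈ X i) :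
    ∃ T : Finset α, T.Nonempty ∧ (∀ i : Fin k, (T ∩ X i).card = 1) ∧
      (m : ℝ) / 2 ≤ (∑ i : Fin k, (f (X i) : ℝ)) / (f T : ℝ) := by
  have hgmem : ∀ i, (hne i).choose ∈ X i := fun i => (hne i).choose_spec
  set g : Fin k → α := fun i => (hne i).choose with hg
  have hginj : Function.Injective g := by
    intro i j hij
    by_contra h
    have hj : g i ∈ X j := by rw [hij]; exact hgmem j
    exact (Finset.disjoint_left.mp (hdisj i j h) (hgmem i)) hj
  set T : Finset α := Finset.univ.image g with hT
  have hTcard : T.card = k := by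
    rw [hT, Finset.card_image_of_injective _ hginj, Finset.card_univ, Fintype.card_fin]
  have hmR : (0:ℝ) < m := by exact_mod_cast hm
  -- each f (X i) ≥ 1
  have hf1 : ∀ i, 1 ≤ f (X i) := by
    intro i
    rw [hf]
    rw [Nat.one_le_ceil_iff]
    apply div_pos _ hmR
    exact_mod_cast (hne i).card_pos
  -- sum of cards = n
  have hsumcard : ∑ i, (X i).card = n := by
    have huniv : (Finset.univ : Finset α) = Finset.univ.biUnion X := by
      ext a
      simp only [Finset.mem_biUnion, Finset.mem_univ, true_iff]
      obtain ⟨i, hi⟩ := hcover a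
      exact ⟨i, trivial, hi⟩
    have hc := Finset.card_biUnion (s := (Finset.univ : Finset (Fin k))) (t := X)
      (fun i _ j _ hij => hdisj i j hij)
    rw [hn, ← Finset.card_univ, huniv, hc]
  -- S ≥ m and S ≥ k
  set S : ℝ := ∑ i : Fin k, (f (X i) : ℝ) with hS
  have hSm : (m:ℝ) ≤ S := by
    have : ∀ i, ((X i).card : ℝ) / m ≤ (f (X i) : ℝ) := by
      intro i; rw [hf]; exact_mod_cast Nat.le_ceil _
    calc (m:ℝ) = (n:ℝ) / m := by
          rw [hnm]; push_cast; field_simp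
      _ = (∑ i, ((X i).card : ℝ)) / m := by
          rw [← hsumcard]; push_cast; ring
      _ = ∑ i, ((X i).card : ℝ) / m := by rw [Finset.sum_div]
      _ ≤ S := Finset.sum_le_sum fun i _ => this i
  have hSk : (k:ℝ) ≤ S := by
    calc (k:ℝ) = ∑ _i : Fin k, (1:ℝ) := by simp
      _ ≤ S := Finset.sum_le_sum fun i _ => by exact_mod_cast hf1 i
  have hS0 : 0 < S := lt_of_lt_of_le hmR hSm
  have hfT : (f T : ℝ) = (⌈(k:ℝ)/m⌉₊ : ℝ) := by rw [hf, hTcard]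
  have hfT0 : (0:ℝ) < (f T : ℝ) := by
    rw [hfT]
    have : (0:ℝ) < (k:ℝ)/m := div_pos (by exact_mod_cast hk) hmR
    exact_mod_cast Nat.one_le_ceil_iff.mpr this
  refine ⟨T, ?_, ?_, ?_⟩
  · rw [← Finset.card_pos, hTcard]; exact hk
  · intro i
    have : T ∩ X i = {g i} := by
      ext a
      simp only [Finset.mem_inter, hT, Finset.mem_image, Finset.mem_univ, true_and,
        Finset.mem_singleton]
      constructor
      · rintro ⟨⟨j, rfl⟩, ha⟩
        by_contra h
        have hji : j ≠ i := fun e => h (by rw [e])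
        exact (Finset.disjoint_left.mp (hdisj j i hji) (hgmem j)) ha
      · rintro rfl
        exact ⟨⟨i, rfl⟩, hgmem i⟩
    rw [this, Finset.card_singleton]
  · rw [le_div_iff₀ hfT0]
    rcases le_or_gt (k:ℝ) (m:ℝ) with hkm | hkm
    · have : (f T : ℝ) = 1 := by
        rw [hfT]
        norm_cast
        refine Nat.le_antisymm (Nat.ceil_le.mpr ?_) (Nat.one_le_ceil_iff.mpr ?_)
        · push_cast; rw [div_le_one hmR]; exact hkm
        · exact div_pos (by exact_mod_cast hk) hmR
      rw [this, mul_one]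
      linarith
    · have hceil : (f T : ℝ) < (k:ℝ)/m + 1 := by
        rw [hfT]
        exact Nat.ceil_lt_add_one (le_of_lt (div_pos (by exact_mod_cast hk) hmR))
      have : (m:ℝ) * (f T : ℝ) < k + m := by
        have := mul_lt_mul_of_pos_left hceil hmR
        calc (m:ℝ) * (f T : ℝ) < m * ((k:ℝ)/m + 1) := this
          _ = k + m := by field_simp
      have h2 : (m:ℝ) * (f T : ℝ) < 2 * k := by linarith
      nlinarith
end

section
/- Every monotone non-decreasing subadditive function g : {0,1,…,W} → ℝ≥0 with g(0)=0 is approximated within a factor of 2 by a concave function g' : {0,…,W} → ℝ≥0, i.e., g(x) ≤ g'(x) ≤ 2·g(x) for all x (where g' can be taken as the concave envelope construction). -/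
/-- Subadditive step bound: `g t ≤ (t/x + 1) * g x` for `t ≤ W`. -/
lemma stmt_5_aux (W : ℕ) (g : ℕ → ℝ)
    (hmono : ∀ x y, x ≤ y → y ≤ W → g x ≤ g y)
    (hsub : ∀ x y, x + y ≤ W → g (x + y) ≤ g x + g y)
    (x : ℕ) (hx : 1 ≤ x) (hgx : 0 ≤ g x) (hxW : x ≤ W) :
    ∀ t, t ≤ W → g t ≤ ((t / x + 1 : ℕ) : ℝ) * g x := by
  intro t
  induction t using Nat.strong_induction_on with
  | _ t ih =>
    intro htW
    by_cases hcase : t ≤ x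
    · calc g t ≤ g x := hmono t x hcase hxW
        _ = 1 * g x := (one_mul _).symm
        _ ≤ ((t / x + 1 : ℕ) : ℝ) * g x := by
            apply mul_le_mul_of_nonneg_right _ hgx
            have : (1 : ℕ) ≤ t / x + 1 := Nat.le_add_left 1 _
            exact_mod_cast this
    · push_neg at hcase
      have hxt : x ≤ t := le_of_lt hcase
      have h1 : g t ≤ g (t - x) + g x := by
        have := hsub (t - x) x (by omega)
        rwa [Nat.sub_add_cancel hxt] at this
      have h2 : g (t - x) ≤ (((t - x) / x + 1 : ℕ) : ℝ) * g x :=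
        ih (t - x) (by omega) (by omega)
      have hdiv : (t - x) / x + 1 = t / x := by
        have := Nat.add_div_right (t - x) hx
        rw [Nat.sub_add_cancel hxt] at this
        omega
      calc g t ≤ (((t - x) / x + 1 : ℕ) : ℝ) * g x + g x := by linarith
        _ = (((t - x) / x + 1 + 1 : ℕ) : ℝ) * g x := by push_cast; ring
        _ = ((t / x + 1 : ℕ) : ℝ) * g x := by rw [hdiv]

/-- Every monotone non-decreasing subadditive `g : {0,…,W} → ℝ≥0` with `g 0 = 0` is
approximated within a factor of 2 by a concave function `g'`. -/
theorem stmt_5 (W : ℕ) (g : ℕ → ℝ)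
    (hnonneg : ∀ x ≤ W, 0 ≤ g x)
    (h0 : g 0 = 0)
    (hmono : ∀ x y, x ≤ y → y ≤ W → g x ≤ g y)
    (hsub : ∀ x y, x + y ≤ W → g (x + y) ≤ g x + g y) :
    ∃ g' : ℕ → ℝ,
      (∀ x ≤ W, 0 ≤ g' x) ∧
      (∀ x, x + 2 ≤ W → g' (x + 2) - g' (x + 1) ≤ g' (x + 1) - g' x) ∧
      (∀ x ≤ W, g x ≤ g' x ∧ g' x ≤ 2 * g x) := by
  classical
  -- the set of values at `x` of affine majorants of `g` on `{0,…,W}`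
  set S : ℕ → Set ℝ :=
    fun x => {y | ∃ c d : ℝ, (∀ t : ℕ, t ≤ W → g t ≤ c * t + d) ∧ y = c * x + d} with hS
  set g' : ℕ → ℝ := fun x => sInf (S x) with hg'
  -- a uniform bound M on g
  obtain ⟨M, hM0, hM⟩ : ∃ M : ℝ, 0 ≤ M ∧ ∀ t ≤ W, g t ≤ M := by
    refine ⟨(Finset.range (W + 1)).sup' ⟨0, by simp⟩ g, ?_, ?_⟩
    · have := Finset.le_sup' (f := g) (b := 0) (s := Finset.range (W + 1)) (by simp)
      rw [h0] at this; exact this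
    · intro t ht
      exact Finset.le_sup' (f := g) (Finset.mem_range.mpr (by omega))
  have hmemM : ∀ x : ℕ, (M * x + M) ∈ S x := by
    intro x
    exact ⟨M, M, fun t ht => le_trans (hM t ht)
      (by nlinarith [Nat.cast_nonneg (α := ℝ) t]), rfl⟩
  have hne : ∀ x : ℕ, (S x).Nonempty := fun x => ⟨_, hmemM x⟩
  have hbdd : ∀ x : ℕ, x ≤ W → BddBelow (S x) := by
    intro x hx
    refine ⟨g x, ?_⟩
    rintro y ⟨c, d, hmaj, rfl⟩
    exact hmaj x hx
  have hlb : ∀ x : ℕ, x ≤ W → g x ≤ g' x := by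
    intro x hx
    exact le_csInf (hne x) (by rintro y ⟨c, d, hmaj, rfl⟩; exact hmaj x hx)
  refine ⟨g', ?_, ?_, ?_⟩
  · intro x hx
    exact le_trans (hnonneg x hx) (hlb x hx)
  · -- discrete concavity
    intro x hxW
    have key : g' (x + 2) + g' x ≤ 2 * g' (x + 1) := by
      apply le_of_forall_pos_le_add
      intro ε hε
      obtain ⟨y, hy, hylt⟩ := Real.lt_sInf_add_pos (hne (x + 1)) (by positivity : (0:ℝ) < ε / 2)
      obtain ⟨c, d, hmaj, rfl⟩ := hy
      have h2 : g' (x + 2) ≤ c * (x + 2) + d :=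
        csInf_le (hbdd (x + 2) hxW) ⟨c, d, hmaj, by push_cast; ring⟩
      have h3 : g' x ≤ c * x + d :=
        csInf_le (hbdd x (by omega)) ⟨c, d, hmaj, rfl⟩
      have : (c * ((x : ℝ) + 2) + d) + (c * x + d) = 2 * (c * ((x:ℝ) + 1) + d) := by ring
      push_cast at h2 h3 hylt ⊢
      nlinarith
    linarith
  · intro x hx
    refine ⟨hlb x hx, ?_⟩
    rcases Nat.eq_zero_or_pos x with rfl | hxpos
    · -- x = 0 : the line t ↦ M * t majorizes g and vanishes at 0
      have hmem : (M * (0:ℕ) + 0) ∈ S 0 := by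
        refine ⟨M, 0, ?_, rfl⟩
        intro t ht
        rcases Nat.eq_zero_or_pos t with rfl | htpos
        · simp [h0]
        · have : (1 : ℝ) ≤ (t : ℝ) := by exact_mod_cast htpos
          have := hM t ht
          nlinarith
      have := csInf_le (hbdd 0 hx) hmem
      simp only [Nat.cast_zero, mul_zero, add_zero] at this
      rw [h0]; linarith
    · -- x ≥ 1 : the line t ↦ (g x / x) * t + g x majorizes g, value 2 g x at x
      have hgx : 0 ≤ g x := hnonneg x hx
      have hxR : (0 : ℝ) < (x : ℝ) := by exact_mod_cast hxpos
      have hmem : ((g x / x) * x + g x) ∈ S x := by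
        refine ⟨g x / x, g x, ?_, rfl⟩
        intro t ht
        have h1 := stmt_5_aux W g hmono hsub x hxpos hgx hx t ht
        have h2 : ((t / x : ℕ) : ℝ) ≤ (t : ℝ) / (x : ℝ) := by
          rw [le_div_iff₀ hxR]
          exact_mod_cast Nat.div_mul_le_self t x
        calc g t ≤ ((t / x + 1 : ℕ) : ℝ) * g x := h1
          _ ≤ ((t : ℝ) / x + 1) * g x := by
              apply mul_le_mul_of_nonneg_right _ hgx
              push_cast
              linarith
          _ = g x / x * t + g x := by field_simp
      have := csInf_le (hbdd x hx) hmem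
      have hxx : g x / x * x = g x := by field_simp
      linarith [this, hxx.symm ▸ this]
end

section
/- Consider the star tree T with root r of cost √n and n−1 leaves of cost 1 each, where f(S) is the cost of the minimal subtree connecting S to r. For every partition P₁,…,P_k of the vertex set of T, there exists a nonempty set S of vertices such that ∑_{i} f(P_i)·1[S ∩ P_i ≠ ∅] ≥ (√n/4)·f(S) (i.e., the stretch is Ω(√n)). -/
open Finset

/-- Lower bound on the star tree: root `0` of cost `√n` and `n-1` leaves of cost `1`,
with `f S = √n + |S \ {root}|` for nonempty `S`. Every partition of the vertex set has
a nonempty request set `S` with stretch at least `√n / 4`. -/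
theorem stmt_9 (n : ℕ) (hn : 2 ≤ n)
    (f : Finset (Fin n) → ℝ)
    (hf : ∀ S : Finset (Fin n), S.Nonempty →
      f S = Real.sqrt n + ((S.erase ⟨0, by omega⟩).card : ℝ))
    (hf0 : f ∅ = 0)
    (P : Finset (Finset (Fin n)))
    (hne : ∀ C ∈ P, C.Nonempty)
    (hdisj : ∀ C ∈ P, ∀ D ∈ P, C ≠ D → Disjoint C D)
    (hcover : ∀ a : Fin n, ∃ C ∈ P, a ∈ C) :
    ∃ S : Finset (Fin n), S.Nonempty ∧
      Real.sqrt n / 4 * f S ≤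
        ∑ C ∈ P.filter (fun C => (C ∩ S).Nonempty), f C := by
  classical
  set r : Fin n := ⟨0, by omega⟩ with hr
  -- choose one element from each part
  let g : Finset (Fin n) → Fin n := fun C => if h : C.Nonempty then h.choose else r
  have hg : ∀ C ∈ P, g C ∈ C := by
    intro C hC
    have h := hne C hC
    simp only [g, dif_pos h]
    exact h.choose_spec
  set S := P.image g with hS
  have hSne : S.Nonempty := by
    obtain ⟨C, hC, _⟩ := hcover r
    exact ⟨g C, mem_image_of_mem g hC⟩
  refine ⟨S, hSne, ?_⟩
  have hfilter : P.filter (fun C => (C ∩ S).Nonempty) = P := by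
    apply filter_true_of_mem
    intro C hC
    exact ⟨g C, mem_inter.2 ⟨hg C hC, mem_image_of_mem g hC⟩⟩
  rw [hfilter, hf S hSne]
  rw [Finset.sum_congr rfl (fun C hC => hf C (hne C hC))]
  rw [Finset.sum_add_distrib, Finset.sum_const, nsmul_eq_mul]
  -- total cards of erased parts
  have hdisj' : ∀ C ∈ P, ∀ D ∈ P, C ≠ D → Disjoint (C.erase r) (D.erase r) :=
    fun C hC D hD h => (hdisj C hC D hD h).mono (erase_subset _ _) (erase_subset _ _)
  have hU : P.biUnion (fun C => C.erase r) = Finset.univ.erase r := by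
    ext a
    simp only [mem_biUnion, mem_erase, mem_univ, and_true]
    constructor
    · rintro ⟨C, hC, ha, haC⟩
      exact ha
    · intro ha
      obtain ⟨C, hC, haC⟩ := hcover a
      exact ⟨C, hC, ha, haC⟩
  have hcard : ∑ C ∈ P, (C.erase r).card = n - 1 := by
    have h1 := Finset.card_biUnion hdisj'
    rw [hU] at h1
    rw [← h1, Finset.card_erase_of_mem (mem_univ r), Finset.card_univ, Fintype.card_fin]
  have hcast : ∑ C ∈ P, ((C.erase r).card : ℝ) = (n : ℝ) - 1 := by
    rw [← Nat.cast_sum, hcard]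
    push_cast [Nat.cast_sub (by omega : 1 ≤ n)]
    ring
  rw [hcast]
  -- sizes
  have hk1 : 1 ≤ P.card := card_pos.2 ⟨_, (hcover r).choose_spec.1⟩
  have hsk : (S.erase r).card ≤ P.card :=
    le_trans (card_le_card (erase_subset _ _)) (card_image_le)
  have hsk' : ((S.erase r).card : ℝ) ≤ (P.card : ℝ) := Nat.cast_le.2 hsk
  have hk1' : (1 : ℝ) ≤ (P.card : ℝ) := by exact_mod_cast hk1
  have hn' : (2 : ℝ) ≤ (n : ℝ) := by exact_mod_cast hn
  have hsq : Real.sqrt n * Real.sqrt n = (n : ℝ) :=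
    Real.mul_self_sqrt (by positivity)
  have hsnn : (0 : ℝ) ≤ Real.sqrt n := Real.sqrt_nonneg _
  nlinarith [mul_le_mul_of_nonneg_left hsk' hsnn, hsq, hsnn, hn',
    mul_le_mul_of_nonneg_right hk1' hsnn]
end

section
/- Let U be a finite set with |U| = n, and f : 2^U → ℝ≥0 monotone non-decreasing and subadditive with f(∅) = 0. Suppose a : U → 2^U assigns each element e to a set a(e) containing e, such that for every X ⊆ U, ∑_{S ∈ a(X)} f(S) ≤ α·f(X), where a(X) = {a(e) : e ∈ X}. Then there exists a partition S₁,…,S_k of U such that for every X ⊆ U, f(X) ≤ ∑_{i: S_i ∩ X ≠ ∅} f(S_i) ≤ α·f(X). -/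
open Finset

/-- From a universal set cover assignment of stretch `α` to a disjoint service function:
if `a : U → 2^U` assigns each element to a set containing it with
`∑_{S ∈ a(X)} f S ≤ α · f X` for all `X`, then there is a partition `P` of `U` with
`f X ≤ ∑_{C ∈ P, C ∩ X ≠ ∅} f C ≤ α · f X` for all `X`. -/
theorem stmt_10 {U : Type*} [Fintype U] [DecidableEq U]
    (f : Finset U → ℝ)
    (hmono : ∀ A B : Finset U, A ⊆ B → f A ≤ f B)
    (hsub : ∀ A B : Finset U, f (A ∪ B) ≤ f A + f B)
    (h0 : f ∅ = 0)
    (hnonneg : ∀ A : Finset U, 0 ≤ f A)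
    (α : ℝ)
    (a : U → Finset U)
    (hmem : ∀ e : U, e ∈ a e)
    (hstretch : ∀ X : Finset U, ∑ S ∈ X.image a, f S ≤ α * f X) :
    ∃ P : Finset (Finset U),
      (∀ C ∈ P, C.Nonempty) ∧
      (∀ C ∈ P, ∀ D ∈ P, C ≠ D → Disjoint C D) ∧
      (∀ e : U, ∃ C ∈ P, e ∈ C) ∧
      (∀ X : Finset U,
        f X ≤ ∑ C ∈ P.filter (fun C => (C ∩ X).Nonempty), f C ∧
        ∑ C ∈ P.filter (fun C => (C ∩ X).Nonempty), f C ≤ α * f X) := by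
  classical
  -- subadditivity over biUnion
  have hbi : ∀ (T : Finset (Finset U)), f (T.biUnion id) ≤ ∑ C ∈ T, f C := by
    intro T
    induction T using Finset.cons_induction with
    | empty => simp [h0]
    | cons C T hC ih =>
      have hb : (Finset.cons C T hC).biUnion id = C ∪ T.biUnion id := by
        simp [Finset.cons_eq_insert]
      rw [hb, Finset.sum_cons]
      calc f (C ∪ T.biUnion id) ≤ f C + f (T.biUnion id) := hsub _ _
        _ ≤ f C + ∑ D ∈ T, f D := by linarith
  set fib : Finset U → Finset U := fun S => Finset.univ.filter (fun e => a e = S) with hfib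
  have hmemfib : ∀ e : U, e ∈ fib (a e) := by
    intro e; simp [hfib]
  have hfibsub : ∀ S, fib S ⊆ S := by
    intro S e he
    simp only [hfib, Finset.mem_filter] at he
    rw [← he.2]; exact hmem e
  refine ⟨(Finset.univ.image a).image fib, ?_, ?_, ?_, ?_⟩
  · intro C hC
    simp only [Finset.mem_image] at hC
    obtain ⟨S, hS, rfl⟩ := hC
    obtain ⟨e, _, rfl⟩ := hS
    exact ⟨e, hmemfib e⟩
  · intro C hC D hD hne
    simp only [Finset.mem_image] at hC hD
    obtain ⟨S, _, rfl⟩ := hC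
    obtain ⟨T, _, rfl⟩ := hD
    rw [Finset.disjoint_left]
    intro e heS heT
    simp only [hfib, Finset.mem_filter] at heS heT
    exact hne (by rw [← heS.2, heT.2])
  · intro e
    exact ⟨fib (a e), Finset.mem_image_of_mem fib (Finset.mem_image_of_mem a (Finset.mem_univ e)), hmemfib e⟩
  · intro X
    set P := (Finset.univ.image a).image fib with hP
    constructor
    · -- lower bound
      have hXsub : X ⊆ (P.filter (fun C => (C ∩ X).Nonempty)).biUnion id := by
        intro e he
        refine Finset.mem_biUnion.mpr ⟨fib (a e), ?_, hmemfib e⟩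
        refine Finset.mem_filter.mpr ⟨Finset.mem_image_of_mem fib (Finset.mem_image_of_mem a (Finset.mem_univ e)), ⟨e, Finset.mem_inter.mpr ⟨hmemfib e, he⟩⟩⟩
      exact le_trans (hmono _ _ hXsub) (hbi _)
    · -- upper bound
      have hsubset : P.filter (fun C => (C ∩ X).Nonempty) ⊆ (X.image a).image fib := by
        intro C hC
        simp only [Finset.mem_filter, hP, Finset.mem_image] at hC
        obtain ⟨⟨S, _, rfl⟩, ⟨x, hx⟩⟩ := hC
        rw [Finset.mem_inter] at hx
        have : a x = S := by
          have := hx.1; simp only [hfib, Finset.mem_filter] at this; exact this.2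
        exact Finset.mem_image.mpr ⟨S, Finset.mem_image.mpr ⟨x, hx.2, this⟩, rfl⟩
      have hinj : Set.InjOn fib (X.image a : Set (Finset U)) := by
        intro S hS T hT hST
        simp only [Finset.coe_image, Set.mem_image, Finset.mem_coe] at hS
        obtain ⟨x, _, rfl⟩ := hS
        have : x ∈ fib T := by rw [← hST]; exact hmemfib x
        simp only [hfib, Finset.mem_filter] at this
        exact this.2
      calc ∑ C ∈ P.filter (fun C => (C ∩ X).Nonempty), f C
          ≤ ∑ C ∈ (X.image a).image fib, f C :=
            Finset.sum_le_sum_of_subset_of_nonneg hsubset (fun C _ _ => hnonneg C)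
        _ = ∑ S ∈ X.image a, f (fib S) := Finset.sum_image hinj
        _ ≤ ∑ S ∈ X.image a, f S := Finset.sum_le_sum (fun S _ => hmono _ _ (hfibsub S))
        _ ≤ α * f X := hstretch X
end

section
/- Let T be a rooted tree with node costs c, let K be a set of nodes of size at most 2√n that forms a subtree of T rooted at r_K, and suppose no node w in K is 'heavy', meaning no w ∈ K satisfies c(R(w)) ≤ 4√n·c(w), where R(w) is the path from w to the root of T. Then c(R(r_K)) ≥ c(K). -/
open Finset

/-- If `K` is a subtree of size at most `2√n` rooted at `r_K` and no node of `K` is heavy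
(i.e. every `w ∈ K` has `c(R(w)) > 4√n·c(w)`), then `c(R(r_K)) ≥ c(K)`. -/
theorem stmt_16 {V : Type*} [Fintype V] [DecidableEq V]
    (n : ℕ) (hn : n = Fintype.card V)
    (c : V → ℝ) (hc : ∀ v, 0 ≤ c v)
    (R : V → Finset V) (hRself : ∀ v, v ∈ R v)
    (K : Finset V) (rK : V) (hrK : rK ∈ K)
    (hKcard : (K.card : ℝ) ≤ 2 * Real.sqrt n)
    (hKsubtree : ∀ w ∈ K, R w ⊆ K ∪ R rK)
    (hnoheavy : ∀ w ∈ K, ¬ (∑ v ∈ R w, c v ≤ 4 * Real.sqrt n * c w)) :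
    ∑ v ∈ K, c v ≤ ∑ v ∈ R rK, c v := by
  by_contra hcon
  push_neg at hcon
  obtain ⟨w, hwK, hwmax⟩ := K.exists_max_image c ⟨rK, hrK⟩
  apply hnoheavy w hwK
  have h1 : ∑ v ∈ R w, c v ≤ ∑ v ∈ K ∪ R rK, c v :=
    Finset.sum_le_sum_of_subset_of_nonneg (hKsubtree w hwK) (fun v _ _ => hc v)
  have h2 : ∑ v ∈ K ∪ R rK, c v ≤ ∑ v ∈ K, c v + ∑ v ∈ R rK, c v :=
    by
      have := Finset.sum_union_inter (s₁ := K) (s₂ := R rK) (f := c)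
      have hpos : 0 ≤ ∑ v ∈ K ∩ R rK, c v := Finset.sum_nonneg (fun v _ => hc v)
      linarith
  have h3 : ∑ v ∈ K, c v ≤ (K.card : ℝ) * c w := by
    calc ∑ v ∈ K, c v ≤ ∑ _v ∈ K, c w := Finset.sum_le_sum (fun v hv => hwmax v hv)
    _ = (K.card : ℝ) * c w := by rw [Finset.sum_const, nsmul_eq_mul]
  have h4 : (K.card : ℝ) * c w ≤ 2 * Real.sqrt n * c w :=
    mul_le_mul_of_nonneg_right hKcard (hc w)
  nlinarith [hc w]
end
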